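/- Consider the dimensionless regularized rim-lamella system on an interval I on which t + t0 > 0, t + t1 > 0, h(t) > 0, V(t) > 0, We > 0 and 1 − cos θ > 0. Then Y(t) = Δ(t) − c(t) is differentiable and satisfies Y'(t) + (Y(t)/(t+t0))·(1 − h_bl(t)/h(t)) + (4π·R(t)·h(t)·c(t)/V(t))·Y(t) = −(2π·R(t)·h(t)/V(t))·Y(t)² − (2c(t)/(t+t0))·(1 − h_bl(t)/h(t)) − (R(t)/(t+t0)²)·(h_bl(t)/h(t))·Φ(t), where Φ(t) = 3·(1 − h_bl(t)/h(t)) + (1/2)·(t+t0)/(t+t1). -/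

import Mathlib

open Real

/-!
Write `T = t + t0`, `β = h_bl / h` and `Δ = ū − U`. The relaxation law for `h` together with
`h_bl' = h_bl / (2 (t + t1))` gives the kinematic identity `ū' = −(Δ/T)(1 − β) − (R/T²) β Φ`, and
since `c² h` is constant, `c' = −c h' / (2h) = (c/T)(1 − β)`. The momentum balance reads
`U' = (2πRh/V)(Δ² − c²)` because `(1 − cos θ)/We = h c²`. Substituting `Δ = Y + c` into
`Y' = ū' − U' − c'` turns `Δ² − c²` into `Y² + 2cY`, which is the claimed equation.
-/

theorem hasDerivAt_const_mul_sqrt_add {a t t1 : ℝ} (hS : 0 < t + t1) :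
    HasDerivAt (fun s => a * √(s + t1)) (a * √(t + t1) / (2 * (t + t1))) t := by
  refine ((((hasDerivAt_id' t).add_const t1).sqrt hS.ne').const_mul a).congr_deriv ?_
  have hpos : 0 < √(t + t1) := sqrt_pos.mpr hS
  field_simp
  rw [sq_sqrt hS.le]

theorem hasDerivAt_sqrt_const_div {h : ℝ → ℝ} {K h' t : ℝ} (hK : 0 < K) (hh : 0 < h t)
    (hderiv : HasDerivAt h h' t) :
    HasDerivAt (fun s => √(K / h s)) (-√(K / h t) * h' / (2 * h t)) t := by
  have hg : 0 < K / h t := div_pos hK hh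
  refine (((hasDerivAt_const t K).fun_div hderiv hh.ne').sqrt hg.ne').congr_deriv ?_
  have hpos : 0 < √(K / h t) := sqrt_pos.mpr hg
  field_simp
  rw [sq_sqrt hg.le]
  field_simp
  ring

theorem hasDerivAt_meanVelocity {R h hbl : ℝ → ℝ} {U t t0 t1 : ℝ}
    (hT : t + t0 ≠ 0) (hS : t + t1 ≠ 0) (hh0 : h t ≠ 0)
    (hR : HasDerivAt R U t) (hh : HasDerivAt h (-(2 / (t + t0)) * (h t - hbl t)) t)
    (hhbl : HasDerivAt hbl (hbl t / (2 * (t + t1))) t) :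
    HasDerivAt (fun s => R s / (s + t0) * (1 - hbl s / h s))
      (-((R t / (t + t0) * (1 - hbl t / h t) - U) / (t + t0)) * (1 - hbl t / h t)
        - R t / (t + t0) ^ 2 * (hbl t / h t)
          * (3 * (1 - hbl t / h t) + 1 / 2 * (t + t0) / (t + t1))) t := by
  refine ((hR.fun_div ((hasDerivAt_id' t).add_const t0) hT).fun_mul
    ((hasDerivAt_const t 1).fun_sub (hhbl.fun_div hh hh0))).congr_deriv ?_
  field_simp
  ring

theorem Y_equation_general
    (We t0 t1 a θ A B : ℝ) (hWe : We > 0) (hθ : 1 - Real.cos θ > 0)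
    (R U V h hbl ubar c : ℝ → ℝ)
    (hbl_def : ∀ t, hbl t = a * Real.sqrt (t + t1))
    (hubar_def : ∀ t, ubar t = (R t / (t + t0)) * (1 - hbl t / h t))
    (hc_def : ∀ t, c t = Real.sqrt ((1 - Real.cos θ) / (We * h t)))
    (hpos : ∀ t ∈ Set.Ioo A B, t + t0 > 0 ∧ t + t1 > 0 ∧ h t > 0 ∧ V t > 0)
    (hR : ∀ t ∈ Set.Ioo A B, HasDerivAt R (U t) t)
    (hh : ∀ t ∈ Set.Ioo A B, HasDerivAt h (-(2 / (t + t0)) * (h t - hbl t)) t)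
    (hU : ∀ t ∈ Set.Ioo A B, DifferentiableAt ℝ U t)
    (hmom : ∀ t ∈ Set.Ioo A B,
      V t * deriv U t
        = 2 * π * R t * h t * (ubar t - U t) ^ 2 - 2 * π * R t * (1 - Real.cos θ) / We) :
    ∀ t ∈ Set.Ioo A B,
      DifferentiableAt ℝ (fun s => ubar s - U s - c s) t
      ∧ deriv (fun s => ubar s - U s - c s) t
          + ((ubar t - U t - c t) / (t + t0)) * (1 - hbl t / h t)
          + (4 * π * R t * h t * c t / V t) * (ubar t - U t - c t)
        = -(2 * π * R t * h t / V t) * (ubar t - U t - c t) ^ 2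
          - (2 * c t / (t + t0)) * (1 - hbl t / h t)
          - (R t / (t + t0) ^ 2) * (hbl t / h t)
              * (3 * (1 - hbl t / h t) + (1 / 2) * (t + t0) / (t + t1)) := by
  intro t ht
  obtain ⟨hT, hS, hh0, hV0⟩ := hpos t ht
  have hhbl : HasDerivAt hbl (hbl t / (2 * (t + t1))) t := by
    have := hasDerivAt_const_mul_sqrt_add (a := a) hS
    rwa [← hbl_def t, ← funext hbl_def] at this
  have hubar := hasDerivAt_meanVelocity hT.ne' hS.ne' hh0.ne' (hR t ht) (hh t ht) hhbl
  rw [← hubar_def t, ← funext hubar_def] at hubar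
  have hc : HasDerivAt c (c t / (t + t0) * (1 - hbl t / h t)) t := by
    have := hasDerivAt_sqrt_const_div (div_pos hθ hWe) hh0 (hh t ht)
    simp only [div_div, ← hc_def] at this
    refine this.congr_deriv ?_
    field_simp
  have hU' : deriv U t = 2 * π * R t * h t / V t * ((ubar t - U t) ^ 2 - c t ^ 2) := by
    have hcap : (1 - cos θ) / We = h t * c t ^ 2 := by
      rw [hc_def, sq_sqrt (by positivity)]
      field_simp
    rw [← mul_right_inj' hV0.ne', hmom t ht, mul_div_assoc, hcap]
    field_simp
  have hY := (hubar.fun_sub (hU t ht).hasDerivAt).fun_sub hc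
  refine ⟨hY.differentiableAt, ?_⟩
  rw [hY.deriv, hU']
  ring

/-- In the dimensionless regularized rim-lamella system (Regime 1,
no slip), `Y = Δ − c` (velocity defect minus capillary speed) is differentiable and
satisfies
`Y' + (Y/(t+t0))·(1 − h_bl/h) + (4πRhc/V)·Y
   = −(2πRh/V)·Y² − (2c/(t+t0))·(1 − h_bl/h) − (R/(t+t0)²)·(h_bl/h)·Φ`,
with `Φ = 3·(1 − h_bl/h) + (1/2)·(t+t0)/(t+t1)` and `c = √((1 − cos θ)/(We·h))`. -/
theorem Y_equation
    (We t0 t1 a θ A B : ℝ) (hWe : We > 0) (ha : a > 0) (hθ : 1 - Real.cos θ > 0)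
    (R U V h hbl ubar c : ℝ → ℝ)
    (hbl_def : ∀ t, hbl t = a * Real.sqrt (t + t1))
    (hubar_def : ∀ t, ubar t = (R t / (t + t0)) * (1 - hbl t / h t))
    (hc_def : ∀ t, c t = Real.sqrt ((1 - Real.cos θ) / (We * h t)))
    (hpos : ∀ t ∈ Set.Ioo A B, t + t0 > 0 ∧ t + t1 > 0 ∧ h t > 0 ∧ V t > 0)
    (hR : ∀ t ∈ Set.Ioo A B, HasDerivAt R (U t) t)
    (hh : ∀ t ∈ Set.Ioo A B, HasDerivAt h (-(2 / (t + t0)) * (h t - hbl t)) t)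
    (hV : ∀ t ∈ Set.Ioo A B, HasDerivAt V (2 * π * R t * h t * (ubar t - U t)) t)
    (hU : ∀ t ∈ Set.Ioo A B, DifferentiableAt ℝ U t)
    (hmom : ∀ t ∈ Set.Ioo A B,
      V t * deriv U t
        = 2 * π * R t * h t * (ubar t - U t) ^ 2 - 2 * π * R t * (1 - Real.cos θ) / We) :
    ∀ t ∈ Set.Ioo A B,
      DifferentiableAt ℝ (fun s => ubar s - U s - c s) t
      ∧ deriv (fun s => ubar s - U s - c s) t
          + ((ubar t - U t - c t) / (t + t0)) * (1 - hbl t / h t)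
          + (4 * π * R t * h t * c t / V t) * (ubar t - U t - c t)
        = -(2 * π * R t * h t / V t) * (ubar t - U t - c t) ^ 2
          - (2 * c t / (t + t0)) * (1 - hbl t / h t)
          - (R t / (t + t0) ^ 2) * (hbl t / h t)
              * (3 * (1 - hbl t / h t) + (1 / 2) * (t + t0) / (t + t1)) :=
  Y_equation_general We t0 t1 a θ A B hWe hθ R U V h hbl ubar c hbl_def hubar_def hc_def hpos hR hh
    hU hmom
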